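/- For the standard normal measure ν = N(0,1) and any differentiable function f such that the expectations exist, E_ν[H_{n+1}(ξ) f(ξ)] = E_ν[Hₙ(ξ) f′(ξ)], where Hₙ is the n-th probabilist's Hermite polynomial. -/

import Mathlib

open MeasureTheory Real ProbabilityTheory
open scoped NNReal

/-! Stein's identity `E[(ξ - m) g(ξ)] = v E[g'(ξ)]` for `ξ ~ N(m, v)` is integration by parts
against the density, whose derivative is `-(x - m) / v` times itself; the continuity of `g`
lets integrability of `(x - m) g` control that of `g`. Applied to `g = Hₙ f` and combined with
`Hₙ₊₁ = x Hₙ - Hₙ'`, it gives the claim. -/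

lemma Continuous.integrable_of_integrable_sub_const_mul {μ : Measure ℝ}
    [IsFiniteMeasureOnCompacts μ] {g : ℝ → ℝ} (hg : Continuous g) (c : ℝ)
    (h : Integrable (fun x => (x - c) * g x) μ) : Integrable g μ := by
  have hcover : Set.univ ⊆ Set.Icc (c - 1) (c + 1) ∪ {x | 1 ≤ |x - c|} := by
    intro x _
    rcases le_or_gt |x - c| 1 with hx | hx
    · exact Or.inl ⟨by linarith [neg_abs_le (x - c)], by linarith [le_abs_self (x - c)]⟩
    · exact Or.inr hx.le
  rw [← integrableOn_univ]
  refine IntegrableOn.mono_set (hg.integrableOn_Icc.union ?_) hcover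
  refine h.norm.integrableOn.mono' hg.aestronglyMeasurable.restrict ?_
  filter_upwards [ae_restrict_mem (measurableSet_le measurable_const
    (measurable_id.sub_const c).abs)] with x hx
  rw [Real.norm_eq_abs, Real.norm_eq_abs, abs_mul]
  exact le_mul_of_one_le_left (abs_nonneg _) hx

namespace ProbabilityTheory

variable {m : ℝ} {v : ℝ≥0}

lemma integrable_gaussianReal_iff (hv : v ≠ 0) {f : ℝ → ℝ} :
    Integrable f (gaussianReal m v) ↔ Integrable (fun x => gaussianPDFReal m v x * f x) := by
  rw [gaussianReal_of_var_ne_zero m hv,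
    integrable_withDensity_iff_integrable_smul' (measurable_gaussianPDF m v)
      (ae_of_all _ fun _ => gaussianPDF_lt_top)]
  simp only [toReal_gaussianPDF, smul_eq_mul]

lemma hasDerivAt_gaussianPDFReal (m : ℝ) (v : ℝ≥0) (x : ℝ) :
    HasDerivAt (gaussianPDFReal m v) (-(x - m) / v * gaussianPDFReal m v x) x := by
  have hexponent : HasDerivAt (fun y => -(y - m) ^ 2 / (2 * v)) (-(x - m) / v) x := by
    refine ((((hasDerivAt_id x).sub_const m).pow 2).neg.div_const (2 * (v : ℝ))).congr_deriv ?_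
    simp only [id]
    ring
  rw [gaussianPDFReal_def]
  refine (hexponent.exp.const_mul (√(2 * π * v))⁻¹).congr_deriv ?_
  ring

theorem integral_sub_mul_gaussianReal_eq_var_mul_integral_deriv (hv : v ≠ 0) {g g' : ℝ → ℝ}
    (hg : ∀ x, HasDerivAt g (g' x) x) (hg' : Integrable g' (gaussianReal m v))
    (hxg : Integrable (fun x => (x - m) * g x) (gaussianReal m v)) :
    ∫ x, (x - m) * g x ∂gaussianReal m v = v * ∫ x, g' x ∂gaussianReal m v := by
  have hg_cont : Continuous g := continuous_iff_continuousAt.2 fun x => (hg x).continuousAt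
  have hgi : Integrable g (gaussianReal m v) := hg_cont.integrable_of_integrable_sub_const_mul m hxg
  have hxg' := (integrable_gaussianReal_iff hv).1 hxg
  have hpdf'g : Integrable (fun x => -(x - m) / v * gaussianPDFReal m v x * g x) :=
    (hxg'.const_mul (-(v : ℝ)⁻¹)).congr (ae_of_all _ fun x => by ring)
  have ibp := integral_mul_deriv_eq_deriv_mul_of_integrable
    (fun x _ => hasDerivAt_gaussianPDFReal m v x) (fun x _ => hg x)
    ((integrable_gaussianReal_iff hv).1 hg') hpdf'g ((integrable_gaussianReal_iff hv).1 hgi)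
  have hscale : ∫ x, -(x - m) / v * gaussianPDFReal m v x * g x
      = -(v : ℝ)⁻¹ * ∫ x, gaussianPDFReal m v x * ((x - m) * g x) := by
    rw [← integral_const_mul]
    exact integral_congr_ae (ae_of_all _ fun x => by ring)
  simp only [integral_gaussianReal_eq_integral_smul hv, smul_eq_mul, ibp, hscale]
  field_simp [NNReal.coe_ne_zero.2 hv]

end ProbabilityTheory

open Polynomial

/-- **Hermite–Stein lemma.**  For the standard normal measure `ν = N(0,1)` and any
differentiable function `f` such that the relevant expectations exist,
`E_ν[H_{n+1}(ξ) f(ξ)] = E_ν[Hₙ(ξ) f′(ξ)]`, where `Hₙ` is the `n`-th probabilist's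
Hermite polynomial. -/
theorem hermite_stein (n : ℕ) (f : ℝ → ℝ) (hf : Differentiable ℝ f)
    (h₁ : Integrable (fun x => (Polynomial.aeval x (Polynomial.hermite (n + 1)) : ℝ) * f x)
      (gaussianReal 0 1))
    (h₂ : Integrable (fun x => (Polynomial.aeval x (Polynomial.hermite n) : ℝ) * deriv f x)
      (gaussianReal 0 1))
    (h₃ : Integrable (fun x => x * (Polynomial.aeval x (Polynomial.hermite n) : ℝ) * f x)
      (gaussianReal 0 1)) :
    ∫ x, (Polynomial.aeval x (Polynomial.hermite (n + 1)) : ℝ) * f x ∂(gaussianReal 0 1) =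
      ∫ x, (Polynomial.aeval x (Polynomial.hermite n) : ℝ) * deriv f x ∂(gaussianReal 0 1) := by
  have hrec (x : ℝ) : aeval x (hermite (n + 1))
      = x * aeval x (hermite n) - aeval x (derivative (hermite n)) := by
    simp [hermite_succ]
  have hderiv (x : ℝ) : HasDerivAt (fun y => aeval y (hermite n) * f y)
      (aeval x (derivative (hermite n)) * f x + aeval x (hermite n) * deriv f x) x :=
    ((hermite n).hasDerivAt_aeval x).mul (hf x).hasDerivAt
  have h₄ : Integrable (fun x => aeval x (derivative (hermite n)) * f x) (gaussianReal 0 1) :=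
    (h₃.sub h₁).congr (ae_of_all _ fun x => by simp only [Pi.sub_apply, hrec]; ring)
  have stein := integral_sub_mul_gaussianReal_eq_var_mul_integral_deriv one_ne_zero hderiv
    (h₄.add h₂) (h₃.congr (ae_of_all _ fun x => by simp only [sub_zero]; ring))
  simp only [sub_zero, NNReal.coe_one, one_mul, integral_add h₄ h₂] at stein
  calc ∫ x, aeval x (hermite (n + 1)) * f x ∂gaussianReal 0 1
      = ∫ x, x * (aeval x (hermite n) * f x) - aeval x (derivative (hermite n)) * f x
          ∂gaussianReal 0 1 := integral_congr_ae (ae_of_all _ fun x => by simp only [hrec]; ring)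
    _ = ∫ x, aeval x (hermite n) * deriv f x ∂gaussianReal 0 1 := by
      rw [integral_sub (h₃.congr (ae_of_all _ fun x => by ring)) h₄, stein]
      ring
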